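/- arXiv:1305.7319 — 2 statements merged into one kernel-verified Lean document; each statement's English description precedes it below -/
import Mathlib

section
/- For the complete graph K_n, the polynomial f_{K_n} = 1 − Σ_{i=1}^n x_i + Σ_{1 ≤ i < j ≤ n} x_i x_j belongs to the Handelman set H_n. -/
/-!
Over the full index set, the Handelman terms `x^I (1 - x)^(univ \ I)` form a partition of unity,
and every squarefree monomial `x^A` is the sum of the terms with `A ⊆ I`. Rewriting `f_{K_n}`
in this basis, the coefficient of the term indexed by `I` with `|I| = k` is
`1 - k + k.choose 2 = (k - 1).choose 2`, which is nonnegative.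
-/

open MvPolynomial Finset

noncomputable def handTerm {V : Type*} [DecidableEq V] (T I : Finset V) : MvPolynomial V ℝ :=
  (∏ i ∈ I, X i) * ∏ j ∈ T \ I, (1 - X j)

def InHandelman {V : Type*} [Fintype V] [DecidableEq V] (t : ℕ)
    (p : MvPolynomial V ℝ) : Prop :=
  ∃ c : Finset V → Finset V → ℝ,
    (∀ T I, 0 ≤ c T I) ∧
    p = ∑ T ∈ Finset.univ.filter (fun T : Finset V => T.card ≤ t),
          ∑ I ∈ T.powerset, C (c T I) * handTerm T I

section HandelmanBasis

variable {V : Type*} [DecidableEq V]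

theorem sum_powerset_handTerm (T : Finset V) : ∑ I ∈ T.powerset, handTerm T I = 1 := by
  have h := prod_add (fun i => (X i : MvPolynomial V ℝ)) (fun i => 1 - X i) T
  simp only [add_sub_cancel, prod_const_one] at h
  exact h.symm

theorem sum_handTerm_of_subset {A T : Finset V} (hA : A ⊆ T) :
    ∑ I ∈ T.powerset with A ⊆ I, handTerm T I = ∏ i ∈ A, X i := by
  -- `x^A = ∏_{i ∈ T} (x_i + g_i)` with `g = 0` on `A` and `g_i = 1 - x_i` off `A`; expanding,
  -- the terms with `A ⊄ I` vanish and the others are Handelman terms.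
  have hprod : ∏ i ∈ A, (X i : MvPolynomial V ℝ) =
      ∏ i ∈ T, (X i + if i ∈ A then 0 else 1 - X i) := by
    rw [← prod_subset hA fun i _ hiA => by simp [hiA]]
    exact prod_congr rfl fun i hi => by simp [hi]
  rw [hprod, prod_add, sum_filter]
  refine sum_congr rfl fun I _ => ?_
  split_ifs with hAI
  · rw [handTerm]
    refine congrArg _ (prod_congr rfl fun j hj => ?_)
    have hjA : j ∉ A := fun hjA => (mem_sdiff.1 hj).2 (hAI hjA)
    simp [hjA]
  · obtain ⟨a, haA, haI⟩ := not_subset.1 hAI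
    rw [prod_eq_zero (mem_sdiff.2 ⟨hA haA, haI⟩) (by simp [haA]), mul_zero]

theorem sum_prod_X_eq_sum_card_mul_handTerm {P : Type*} {T : Finset V} (s : Finset P)
    (S : P → Finset V) (hS : ∀ p ∈ s, S p ⊆ T) :
    ∑ p ∈ s, ∏ i ∈ S p, X i =
      ∑ I ∈ T.powerset, (#{p ∈ s | S p ⊆ I} : MvPolynomial V ℝ) * handTerm T I := by
  calc ∑ p ∈ s, ∏ i ∈ S p, X i
      = ∑ p ∈ s, ∑ I ∈ T.powerset with S p ⊆ I, handTerm T I :=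
        sum_congr rfl fun p hp => (sum_handTerm_of_subset (hS p hp)).symm
    _ = ∑ I ∈ T.powerset, ∑ p ∈ s with S p ⊆ I, handTerm T I := by
        simp only [sum_filter]
        exact sum_comm
    _ = _ := by simp only [sum_const, nsmul_eq_mul]

theorem sum_X_eq_sum_card_mul_handTerm (T : Finset V) :
    ∑ i ∈ T, X i = ∑ I ∈ T.powerset, (#I : MvPolynomial V ℝ) * handTerm T I := by
  have hcount : ∀ I ∈ T.powerset, #{i ∈ T | {i} ⊆ I} = #I := fun I hI => by
    simp [singleton_subset_iff, filter_mem_eq_inter, inter_eq_right.2 (mem_powerset.1 hI)]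
  calc ∑ i ∈ T, X i = ∑ i ∈ T, ∏ j ∈ {i}, X j := by simp only [prod_singleton]
    _ = ∑ I ∈ T.powerset, (#{i ∈ T | {i} ⊆ I} : MvPolynomial V ℝ) * handTerm T I :=
        sum_prod_X_eq_sum_card_mul_handTerm T (fun i => {i}) (by simp)
    _ = _ := sum_congr rfl fun I hI => by rw [hcount I hI]

theorem sum_X_mul_X_of_lt_eq_sum_choose_two_mul_handTerm [LinearOrder V] (T : Finset V) :
    ∑ q ∈ T ×ˢ T with q.1 < q.2, X q.1 * X q.2 =
      ∑ I ∈ T.powerset, ((#I).choose 2 : MvPolynomial V ℝ) * handTerm T I := by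
  have hcount : ∀ I ∈ T.powerset,
      #{q ∈ {q ∈ T ×ˢ T | q.1 < q.2} | {q.1, q.2} ⊆ I} = (#I).choose 2 := fun I hI => by
    rw [← card_product_filter_lt]
    congr 1
    ext q
    have hIT := mem_powerset.1 hI
    simp only [mem_filter, mem_product, insert_subset_iff, singleton_subset_iff]
    grind
  calc ∑ q ∈ T ×ˢ T with q.1 < q.2, X q.1 * X q.2
      = ∑ q ∈ T ×ˢ T with q.1 < q.2, ∏ i ∈ {q.1, q.2}, X i :=
        sum_congr rfl fun q hq => (prod_pair (mem_filter.1 hq).2.ne).symm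
    _ = ∑ I ∈ T.powerset, (#{q ∈ {q ∈ T ×ˢ T | q.1 < q.2} | {q.1, q.2} ⊆ I} :
          MvPolynomial V ℝ) * handTerm T I :=
        sum_prod_X_eq_sum_card_mul_handTerm {q ∈ T ×ˢ T | q.1 < q.2} (fun q => {q.1, q.2})
          fun q hq => by simp_all [insert_subset_iff]
    _ = _ := sum_congr rfl fun I hI => by rw [hcount I hI]

end HandelmanBasis

theorem inHandelman_of_eq_sum_handTerm_univ {V : Type*} [Fintype V] [DecidableEq V] {t : ℕ}
    (ht : Fintype.card V ≤ t) {c : Finset V → ℝ} (hc : ∀ I, 0 ≤ c I) {p : MvPolynomial V ℝ}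
    (hp : p = ∑ I ∈ univ.powerset, C (c I) * handTerm univ I) : InHandelman t p := by
  refine ⟨fun T I => if T = univ then c I else 0,
    fun T I => ite_nonneg (hc I) le_rfl, ?_⟩
  rw [hp, eq_comm, sum_eq_single_of_mem univ (by simpa using ht) fun T _ hT => by simp [hT]]
  simp

theorem choose_two_sub_add_one_nonneg (k : ℕ) : 0 ≤ (k.choose 2 : ℝ) - k + 1 := by
  rcases k with _ | k
  · norm_num
  · rw [Nat.choose_succ_succ, Nat.choose_one_right]
    push_cast
    linarith [(k.choose 2).cast_nonneg (α := ℝ)]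

/-- For the complete graph `K_n`, the polynomial
`f_{K_n} = 1 − Σ_i x_i + Σ_{i<j} x_i x_j` belongs to the Handelman set `H_n`. -/
theorem complete_graph_poly_mem_Handelman (n : ℕ) :
    InHandelman n ((1 : MvPolynomial (Fin n) ℝ) - (∑ i, X i) +
      ∑ q ∈ Finset.univ.filter (fun q : Fin n × Fin n => q.1 < q.2), X q.1 * X q.2) := by
  refine inHandelman_of_eq_sum_handTerm_univ (Fintype.card_fin n).le
    (fun I => choose_two_sub_add_one_nonneg #I) ?_
  rw [← sum_powerset_handTerm univ, sum_X_eq_sum_card_mul_handTerm, ← univ_product_univ,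
    sum_X_mul_X_of_lt_eq_sum_choose_two_mul_handTerm, ← sum_sub_distrib, ← sum_add_distrib]
  refine sum_congr rfl fun I _ => ?_
  rw [map_add, map_sub, map_one, map_natCast, map_natCast]
  ring
end

section
/- Let G = (V,E) be a finite simple graph with node weights w ∈ ℝ_+^V and edge weights satisfying w_{ij} ≥ min{w_i, w_j} for all edges ij ∈ E, and let t ≥ 2 be an integer. Then ρ_t(G,w) − p_{G,w} ∈ H_t, and consequently p_han^{(t)}(G,w) ≤ ρ_t(G,w). -/
open MvPolynomial Finset

open Classical in
noncomputable def pGW {V : Type*} [Fintype V] (G : SimpleGraph V)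
    (w : V → ℝ) (W : V → V → ℝ) : MvPolynomial V ℝ :=
  (∑ i, C (w i) * X i) -
    C (2⁻¹ : ℝ) * ∑ q ∈ Finset.univ.filter (fun q : V × V => G.Adj q.1 q.2),
      C (W q.1 q.2) * (X q.1 * X q.2)

noncomputable def alphaW {V : Type*} (G : SimpleGraph V) (w : V → ℝ) : ℝ :=
  sSup {v : ℝ | ∃ S : Finset V, (∀ i ∈ S, ∀ j ∈ S, ¬ G.Adj i j) ∧ v = ∑ i ∈ S, w i}

def IsCliqueSet {V : Type*} (G : SimpleGraph V) (Cq : Finset V) : Prop :=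
  ∀ i ∈ Cq, ∀ j ∈ Cq, i ≠ j → G.Adj i j

open Classical in
noncomputable def rhoT {V : Type*} [Fintype V] (G : SimpleGraph V) (w : V → ℝ) (t : ℕ) : ℝ :=
  sInf {v : ℝ | ∃ lam : Finset V → ℝ, (∀ Cq, 0 ≤ lam Cq) ∧
    (∀ Cq, lam Cq ≠ 0 → IsCliqueSet G Cq ∧ Cq.card ≤ t) ∧
    (∀ i, (∑ Cq : Finset V, if i ∈ Cq then lam Cq else 0) = w i) ∧
    v = ∑ Cq : Finset V, lam Cq}

/-! An optimal fractional clique cover `λ` exists: `ρ_t` is the minimum of `∑ λ_T` over a closed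
set of nonnegative vectors. For a clique `T`, the polynomial
`1 - ∑_{i ∈ T} x_i + ∑_{i<j ∈ T} x_i x_j` equals `∑_{I ⊆ T} c_{|I|} x^I (1-x)^{T∖I}` with
`c_m = (m-1)(m-2)/2 ≥ 0`, since `c_m = 1 - m + m(m-1)/2` and
`∑_{I ⊆ T} |I|(|I|-1)/2 ⋅ x^I (1-x)^{T∖I} = ∑_{i<j ∈ T} x_i x_j`.
Weighting these identities by `λ_T` and summing gives `ρ_t - ∑ w_i x_i + ∑_{ij ∈ E} σ_{ij} x_i x_j`
with `σ_{ij} = ∑_{T ∋ i,j} λ_T ≤ min(w_i, w_j) ≤ w_{ij}`, and the remaining terms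
`(w_{ij} - σ_{ij}) x_i x_j` are Handelman terms of degree `2 ≤ t`. -/

theorem Finset.sum_offDiag_mul_eq_sq_sub {ι R : Type*} [DecidableEq ι] [CommRing R]
    (s : Finset ι) (f : ι → R) :
    ∑ p ∈ s.offDiag, f p.1 * f p.2 = (∑ i ∈ s, f i) ^ 2 - ∑ i ∈ s, f i ^ 2 := by
  rw [sq, sum_mul_sum, ← sum_product', ← diag_union_offDiag, sum_union (disjoint_diag_offDiag s),
    sum_diag]
  simp [sq]

theorem Finset.sum_mul_sum_eq_sum_sum_filter_mul {α β R : Type*} [DecidableEq β] [CommSemiring R]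
    {S : Finset α} {s : Finset β} {g : α → Finset β} (hg : ∀ a ∈ S, g a ⊆ s)
    (lam : α → R) (f : β → R) :
    ∑ a ∈ S, lam a * ∑ b ∈ g a, f b = ∑ b ∈ s, (∑ a ∈ S with b ∈ g a, lam a) * f b := by
  simp_rw [mul_sum, sum_mul]
  exact sum_comm' fun a b => by
    rw [mem_filter]
    exact ⟨fun h => ⟨h, hg a h.1 h.2⟩, fun h => h.1⟩

theorem exists_isMinOn_sum_of_isClosed {ι : Type*} [Fintype ι] {F : Set (ι → ℝ)}
    (hF : IsClosed F) (hne : F.Nonempty) (hnn : ∀ x ∈ F, 0 ≤ x) :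
    ∃ x ∈ F, IsMinOn (fun x => ∑ i, x i) F x := by
  obtain ⟨x₀, hx₀⟩ := hne
  have hK : IsCompact (F ∩ {x | ∑ i, x i ≤ ∑ i, x₀ i}) := by
    refine (isCompact_Icc (b := fun _ => ∑ i, x₀ i)).of_isClosed_subset
      (hF.inter (isClosed_le (by fun_prop) continuous_const)) fun x hx => ⟨hnn x hx.1, fun i => ?_⟩
    exact (single_le_sum (fun j _ => hnn x hx.1 j) (mem_univ i)).trans hx.2
  obtain ⟨x, hxK, hmin⟩ := hK.exists_isMinOn ⟨x₀, hx₀, le_refl (∑ i, x₀ i)⟩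
    (by fun_prop : Continuous fun x : ι → ℝ => ∑ i, x i).continuousOn
  refine ⟨x, hxK.1, fun y hy => ?_⟩
  by_cases hyK : ∑ i, y i ≤ ∑ i, x₀ i
  · exact hmin ⟨hy, hyK⟩
  · exact hxK.2.trans (le_of_not_ge hyK)

section HandTerm

variable {V : Type*} [DecidableEq V]

theorem handTerm_self (T : Finset V) : handTerm T T = ∏ i ∈ T, X i := by
  simp [handTerm]

theorem handTerm_insert {a : V} {T I : Finset V} (ha : a ∉ T) (hI : I ⊆ T) :
    handTerm (insert a T) I = (1 - X a) * handTerm T I := by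
  rw [handTerm, insert_sdiff_of_notMem _ (fun h => ha (hI h)),
    prod_insert (fun h => ha (mem_sdiff.1 h).1), handTerm]
  ring

theorem handTerm_insert_insert {a : V} {T I : Finset V} (ha : a ∉ T) (hI : I ⊆ T) :
    handTerm (insert a T) (insert a I) = X a * handTerm T I := by
  rw [handTerm, insert_sdiff_insert, sdiff_insert_of_notMem ha, prod_insert (fun h => ha (hI h)),
    handTerm]
  ring

theorem sum_powerset_insert_mul_handTerm {a : V} {T : Finset V} (ha : a ∉ T)
    (f : ℕ → MvPolynomial V ℝ) :
    ∑ I ∈ (insert a T).powerset, f #I * handTerm (insert a T) I =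
      (1 - X a) * ∑ I ∈ T.powerset, f #I * handTerm T I +
        X a * ∑ I ∈ T.powerset, f (#I + 1) * handTerm T I := by
  rw [sum_powerset_insert ha, mul_sum, mul_sum]
  congr 1 <;> refine sum_congr rfl fun I hI => ?_
  · rw [handTerm_insert ha (mem_powerset.1 hI)]
    ring
  · rw [card_insert_of_notMem (fun h => ha (mem_powerset.1 hI h)),
      handTerm_insert_insert ha (mem_powerset.1 hI)]
    ring

theorem sum_powerset_card_mul_handTerm (T : Finset V) :
    ∑ I ∈ T.powerset, (#I : MvPolynomial V ℝ) * handTerm T I = ∑ i ∈ T, X i := by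
  induction T using Finset.induction_on with
  | empty => simp
  | insert a T ha ih =>
    rw [sum_powerset_insert_mul_handTerm ha (fun m => (m : MvPolynomial V ℝ)), sum_insert ha]
    simp only [Nat.cast_add, Nat.cast_one, add_mul, one_mul, sum_add_distrib, ih,
      sum_powerset_handTerm]
    ring

noncomputable def cliqueCoeff (m : ℕ) : ℝ := ((m : ℝ) - 1) * ((m : ℝ) - 2) / 2

theorem cliqueCoeff_nonneg (m : ℕ) : 0 ≤ cliqueCoeff m := by
  rcases m with _ | _ | m
  · norm_num [cliqueCoeff]
  · norm_num [cliqueCoeff]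
  · simp only [cliqueCoeff]
    push_cast
    ring_nf
    positivity

theorem cliqueCoeff_succ (m : ℕ) : cliqueCoeff (m + 1) = cliqueCoeff m + ((m : ℝ) - 1) := by
  simp only [cliqueCoeff]
  push_cast
  ring

theorem sum_powerset_cliqueCoeff_mul_handTerm (T : Finset V) :
    ∑ I ∈ T.powerset, C (cliqueCoeff #I) * handTerm T I =
      1 - ∑ i ∈ T, X i + C (2⁻¹ : ℝ) * ∑ p ∈ T.offDiag, X p.1 * X p.2 := by
  have two : (C (2⁻¹ : ℝ) : MvPolynomial V ℝ) * 2 = 1 := by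
    rw [← map_ofNat C 2, ← C_mul]
    norm_num
  rw [Finset.sum_offDiag_mul_eq_sq_sub]
  induction T using Finset.induction_on with
  | empty => simp [handTerm, cliqueCoeff]
  | insert a T ha ih =>
    rw [sum_powerset_insert_mul_handTerm ha (fun m => C (cliqueCoeff m))]
    simp only [cliqueCoeff_succ, map_add, map_sub, map_natCast, map_one, add_mul, sub_mul,
      sum_add_distrib, sum_sub_distrib, sum_powerset_card_mul_handTerm, one_mul,
      sum_powerset_handTerm, ih, sum_insert ha]
    linear_combination -(X a * ∑ i ∈ T, X i) * two

end HandTerm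

section HandelmanCone

variable {V : Type*} [Fintype V] [DecidableEq V] {t : ℕ} {p q : MvPolynomial V ℝ}

theorem InHandelman.zero : InHandelman t (0 : MvPolynomial V ℝ) :=
  ⟨0, fun _ _ => le_rfl, by simp⟩

theorem InHandelman.add (hp : InHandelman t p) (hq : InHandelman t q) :
    InHandelman t (p + q) := by
  obtain ⟨c, hc, rfl⟩ := hp
  obtain ⟨d, hd, rfl⟩ := hq
  exact ⟨c + d, fun T I => add_nonneg (hc T I) (hd T I), by
    simp only [Pi.add_apply, map_add, add_mul, sum_add_distrib]⟩

theorem InHandelman.C_mul {a : ℝ} (ha : 0 ≤ a) (hp : InHandelman t p) :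
    InHandelman t (C a * p) := by
  obtain ⟨c, hc, rfl⟩ := hp
  exact ⟨fun T I => a * c T I, fun T I => mul_nonneg ha (hc T I), by
    simp only [mul_sum, map_mul, mul_assoc]⟩

theorem InHandelman.sum {ι : Type*} {s : Finset ι} {f : ι → MvPolynomial V ℝ}
    (h : ∀ i ∈ s, InHandelman t (f i)) : InHandelman t (∑ i ∈ s, f i) :=
  Finset.sum_induction f (InHandelman t) (fun _ _ => InHandelman.add) InHandelman.zero h

theorem inHandelman_handTerm {T I : Finset V} (hT : #T ≤ t) (hI : I ⊆ T) :
    InHandelman t (handTerm T I) := by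
  refine ⟨fun T' I' => if T' = T ∧ I' = I then 1 else 0, fun _ _ => by positivity, ?_⟩
  rw [sum_eq_single_of_mem T (by simpa using hT), sum_eq_single_of_mem I (mem_powerset.2 hI)]
  · simp
  · intro I' _ hI'
    simp [hI']
  · intro T' _ hT'
    simp [hT']

theorem InHandelman.eval_nonneg (hp : InHandelman t p) {x : V → ℝ} (hx : ∀ i, x i ∈ Set.Icc 0 1) :
    0 ≤ eval x p := by
  obtain ⟨c, hc, rfl⟩ := hp
  simp only [handTerm, map_sum, map_mul, map_prod, map_sub, map_one, eval_C, eval_X]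
  exact sum_nonneg fun T _ => sum_nonneg fun I _ => mul_nonneg (hc T I) <|
    mul_nonneg (prod_nonneg fun i _ => (hx i).1) (prod_nonneg fun j _ => sub_nonneg.2 (hx j).2)

theorem inHandelman_sum_powerset_cliqueCoeff_mul_handTerm {T : Finset V} (hT : #T ≤ t) :
    InHandelman t (∑ I ∈ T.powerset, C (cliqueCoeff #I) * handTerm T I) :=
  InHandelman.sum fun _ hI =>
    (inHandelman_handTerm hT (mem_powerset.1 hI)).C_mul (cliqueCoeff_nonneg _)

theorem inHandelman_X_mul_X {i j : V} (hij : i ≠ j) (ht : 2 ≤ t) :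
    InHandelman t (X i * X j : MvPolynomial V ℝ) := by
  rw [← prod_pair hij, ← handTerm_self]
  exact inHandelman_handTerm ((card_pair hij).trans_le ht) subset_rfl

end HandelmanCone

section FractionalCliqueCover

variable {V : Type*} [Fintype V] {G : SimpleGraph V} {w : V → ℝ} {t : ℕ}

open Classical in
def IsFracCliqueCover (G : SimpleGraph V) (w : V → ℝ) (t : ℕ) (lam : Finset V → ℝ) : Prop :=
  (∀ Cq, 0 ≤ lam Cq) ∧ (∀ Cq, lam Cq ≠ 0 → IsCliqueSet G Cq ∧ Cq.card ≤ t) ∧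
    ∀ i, (∑ Cq : Finset V, if i ∈ Cq then lam Cq else 0) = w i

theorem rhoT_eq_sInf (G : SimpleGraph V) (w : V → ℝ) (t : ℕ) :
    rhoT G w t = sInf {v | ∃ lam, IsFracCliqueCover G w t lam ∧ v = ∑ Cq, lam Cq} := by
  simp only [rhoT, IsFracCliqueCover, and_assoc]

theorem isClosed_setOf_isFracCliqueCover : IsClosed {lam | IsFracCliqueCover G w t lam} := by
  simp only [IsFracCliqueCover, Set.ofPred_and, Set.ofPred_forall]
  refine (isClosed_iInter fun T => ?_).inter
    ((isClosed_iInter fun T => ?_).inter (isClosed_iInter fun i => ?_))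
  · exact isClosed_le continuous_const (continuous_apply T)
  · exact isClosed_imp (isOpen_ne_fun (continuous_apply T) continuous_const) isClosed_const
  · refine isClosed_eq (continuous_finsetSum _ fun T _ => ?_) continuous_const
    split_ifs <;> fun_prop

open Classical in
theorem isFracCliqueCover_singletons (hw : ∀ v, 0 ≤ w v) (ht : 1 ≤ t) :
    IsFracCliqueCover G w t fun Cq => ∑ j, if Cq = {j} then w j else 0 := by
  refine ⟨fun Cq => sum_nonneg fun j _ => by split_ifs <;> simp [hw], fun Cq h => ?_, fun i => ?_⟩
  · obtain ⟨j, rfl⟩ : ∃ j, Cq = {j} := by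
      by_contra! hne
      exact h (sum_eq_zero fun j _ => if_neg (hne j))
    exact ⟨fun a ha b hb hab => absurd ((mem_singleton.1 ha).trans (mem_singleton.1 hb).symm) hab,
      by simpa using ht⟩
  · rw [← sum_filter, sum_comm]
    simp

theorem exists_isFracCliqueCover_rhoT_eq (hw : ∀ v, 0 ≤ w v) (ht : 1 ≤ t) :
    ∃ lam, IsFracCliqueCover G w t lam ∧ rhoT G w t = ∑ Cq, lam Cq := by
  obtain ⟨lam, hlam, hmin⟩ := exists_isMinOn_sum_of_isClosed isClosed_setOf_isFracCliqueCover
    ⟨_, isFracCliqueCover_singletons hw ht⟩ fun lam h => h.1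
  refine ⟨lam, hlam, ?_⟩
  rw [rhoT_eq_sInf]
  exact IsLeast.csInf_eq ⟨⟨lam, hlam, rfl⟩, by rintro _ ⟨mu, hmu, rfl⟩; exact hmin hmu⟩

end FractionalCliqueCover

section Relaxation

variable {V : Type*} [Fintype V] [DecidableEq V] {G : SimpleGraph V} {w : V → ℝ}
  {lam : Finset V → ℝ}

open Classical in
theorem C_sum_sub_pGW_eq (W : V → V → ℝ) (hcov : ∀ i, ∑ T with i ∈ T, lam T = w i)
    (hclique : ∀ T, lam T ≠ 0 → IsCliqueSet G T) :
    C (∑ T, lam T) - pGW G w W =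
      ∑ T, C (lam T) * ∑ I ∈ T.powerset, C (cliqueCoeff #I) * handTerm T I +
        ∑ p with G.Adj p.1 p.2,
          C ((W p.1 p.2 - ∑ T with p ∈ T.offDiag, lam T) / 2) * (X p.1 * X p.2) := by
  have hlin : ∑ T, C (lam T) * ∑ i ∈ T, X i = ∑ i, C (w i) * X i := by
    rw [sum_mul_sum_eq_sum_sum_filter_mul (fun T _ => subset_univ T)]
    simp_rw [← map_sum, hcov]
  have hquad : ∑ T, C (lam T) * ∑ p ∈ T.offDiag, X p.1 * X p.2 =
      ∑ p with G.Adj p.1 p.2, C (∑ T with p ∈ T.offDiag, lam T) * (X p.1 * X p.2) := by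
    rw [sum_mul_sum_eq_sum_sum_filter_mul (fun T _ => offDiag_mono (subset_univ T))]
    simp_rw [← map_sum]
    refine (sum_subset (fun p hp => ?_) fun p _ hnadj => ?_).symm
    · exact mem_offDiag.2 ⟨mem_univ _, mem_univ _, (mem_filter.1 hp).2.ne⟩
    · rw [sum_eq_zero, C_0, zero_mul]
      intro T hT
      by_contra h
      obtain ⟨h1, h2, hne⟩ := mem_offDiag.1 (mem_filter.1 hT).2
      exact hnadj (mem_filter.2 ⟨mem_univ _, hclique T h _ h1 _ h2 hne⟩)
  have hedge : ∑ p with G.Adj p.1 p.2,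
        C ((W p.1 p.2 - ∑ T with p ∈ T.offDiag, lam T) / 2) * (X p.1 * X p.2) =
      C 2⁻¹ * ∑ p : V × V with G.Adj p.1 p.2, C (W p.1 p.2) * (X p.1 * X p.2) -
        C 2⁻¹ * ∑ p : V × V with G.Adj p.1 p.2,
          C (∑ T with p ∈ T.offDiag, lam T) * (X p.1 * X p.2) := by
    rw [mul_sum, mul_sum, ← sum_sub_distrib]
    refine sum_congr rfl fun p _ => ?_
    rw [div_eq_inv_mul, map_mul, map_sub]
    ring
  simp_rw [sum_powerset_cliqueCoeff_mul_handTerm, mul_add, mul_sub, mul_one,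
    mul_left_comm (C (lam _)) (C 2⁻¹), sum_add_distrib, sum_sub_distrib, ← mul_sum, hlin, hquad]
  rw [hedge, ← map_sum, pGW]
  ring

open Classical in
theorem IsFracCliqueCover.inHandelman_C_sum_sub_pGW {t : ℕ} {W : V → V → ℝ}
    (hlam : IsFracCliqueCover G w t lam) (hW : ∀ i j, G.Adj i j → min (w i) (w j) ≤ W i j)
    (ht : 2 ≤ t) : InHandelman t (C (∑ T, lam T) - pGW G w W) := by
  obtain ⟨hnn, hsupp, hcov⟩ := hlam
  have hcov' (i : V) : ∑ T with i ∈ T, lam T = w i := by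
    rw [sum_filter]
    convert hcov i
  have hpair (p : V × V) : ∑ T with p ∈ T.offDiag, lam T ≤ min (w p.1) (w p.2) := by
    rw [← hcov' p.1, ← hcov' p.2]
    exact le_min
      (sum_le_sum_of_subset_of_nonneg (monotone_filter_right _ fun T _ h => (mem_offDiag.1 h).1)
        fun T _ _ => hnn T)
      (sum_le_sum_of_subset_of_nonneg (monotone_filter_right _ fun T _ h => (mem_offDiag.1 h).2.1)
        fun T _ _ => hnn T)
  rw [C_sum_sub_pGW_eq W hcov' fun T h => (hsupp T h).1]
  refine (InHandelman.sum fun T _ => ?_).add (InHandelman.sum fun p hp => ?_)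
  · by_cases h : lam T = 0
    · rw [h, C_0, zero_mul]
      exact InHandelman.zero
    · exact (inHandelman_sum_powerset_cliqueCoeff_mul_handTerm (hsupp T h).2).C_mul (hnn T)
  · have hadj := (mem_filter.1 hp).2
    exact (inHandelman_X_mul_X hadj.ne ht).C_mul
      (div_nonneg (sub_nonneg.2 ((hpair p).trans (hW _ _ hadj))) zero_le_two)

end Relaxation

theorem rhoT_sub_pGW_mem_Handelman_general {V : Type*} [Fintype V] [DecidableEq V]
    (G : SimpleGraph V) (w : V → ℝ) (W : V → V → ℝ) (hw : ∀ v, 0 ≤ w v)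
    (hW : ∀ i j, G.Adj i j → min (w i) (w j) ≤ W i j)
    (t : ℕ) (ht : 2 ≤ t) :
    InHandelman t (C (rhoT G w t) - pGW G w W) ∧
    sInf {lam : ℝ | InHandelman t (C lam - pGW G w W)} ≤ rhoT G w t := by
  obtain ⟨lam, hlam, hrho⟩ := exists_isFracCliqueCover_rhoT_eq hw (one_le_two.trans ht)
  have hmem : InHandelman t (C (rhoT G w t) - pGW G w W) :=
    hrho ▸ hlam.inHandelman_C_sum_sub_pGW hW ht
  refine ⟨hmem, csInf_le ⟨0, fun v hv => ?_⟩ hmem⟩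
  simpa [pGW] using hv.eval_nonneg (x := 0) fun _ => ⟨le_rfl, zero_le_one⟩

/-- For node weights `w ≥ 0`, edge weights `w_{ij} ≥ min(w_i,w_j)` and
`t ≥ 2`: `ρ_t(G,w) − p_{G,w} ∈ H_t`, and consequently `p_han^{(t)}(G,w) ≤ ρ_t(G,w)`. -/
theorem rhoT_sub_pGW_mem_Handelman {V : Type*} [Fintype V] [DecidableEq V]
    (G : SimpleGraph V) (w : V → ℝ) (W : V → V → ℝ) (hw : ∀ v, 0 ≤ w v)
    (hWs : ∀ i j, W i j = W j i)
    (hW : ∀ i j, G.Adj i j → min (w i) (w j) ≤ W i j)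
    (t : ℕ) (ht : 2 ≤ t) :
    InHandelman t (C (rhoT G w t) - pGW G w W) ∧
    sInf {lam : ℝ | InHandelman t (C lam - pGW G w W)} ≤ rhoT G w t :=
  rhoT_sub_pGW_mem_Handelman_general G w W hw hW t ht
end
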